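/- For every λ ∈ X⁺: E^∞_λ = ∑ (over all sequences (μ₀, μ₁, μ₂, …) in X⁺ with μ_h = 0 for all but finitely many h) of ( ∏_{h≥0} p_{μ_h, λ^h + p·μ_{h+1}} ) · E⁰_{μ₀}. Here in each term all but finitely many factors of the product equal 1 (namely p_{0,0} = 1), so the infinite product makes sense, and only finitely many sequences contribute a nonzero term, so the sum makes sense. -/

import Mathlib

/-!
Setting: `X⁺ = I → ℕ` (componentwise addition) for a finite index set `I`, `p ≥ 2`.
`digit p lam k` is the `k`-th base-`p` digit `λ^k` of `lam` (so `λ^k ∈ X⁺_red` and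
`lam = ∑_k p^k • λ^k`); `shift p k lam = ∑_{j≥k} p^{j-k} λ^j`;
`trunc p k lam = ∑_{0≤j≤k-1} p^j λ^j`.
-/

namespace LusztigChar

variable {I : Type*} [Fintype I] {R : Type*} [CommRing R]

/-- The `k`-th digit `λ^k` of `λ ∈ X⁺ = I → ℕ` in base `p`. -/
def digit (p : ℕ) (lam : I → ℕ) (k : ℕ) : I → ℕ := fun i => lam i / p ^ k % p

/-- `∑_{j≥k} p^{j-k} λ^j ∈ X⁺` (a sum with finitely many nonzero terms). -/
noncomputable def shift (p k : ℕ) (lam : I → ℕ) : I → ℕ :=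
  ∑ᶠ j : ℕ, p ^ j • digit p lam (k + j)

/-- `∑_{0≤j≤k-1} p^j λ^j ∈ X⁺`. -/
def trunc (p k : ℕ) (lam : I → ℕ) : I → ℕ :=
  ∑ j ∈ Finset.range k, p ^ j • digit p lam j

/-- The recursive family `E^k : X⁺ → R` built from `E⁰ = E0` and the integers
`p_{μ,λ} = P μ λ`:  `E^k_λ = ∑_μ p_{μ, ∑_{j≥k-1} p^{j-k+1} λ^j} · E^{k-1}_{∑_{0≤j≤k-2} p^j λ^j + p^{k-1} μ}`
for `k ≥ 1`. -/
noncomputable def E (p : ℕ) (P : (I → ℕ) → (I → ℕ) → ℤ) (E0 : (I → ℕ) → R) :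
    ℕ → (I → ℕ) → R
  | 0 => E0
  | k + 1 => fun lam =>
      ∑ᶠ mu : I → ℕ, P mu (shift p k lam) • E p P E0 k (trunc p k lam + p ^ k • mu)

/-!
Fix `λ` and put `A_h(x, y) = p_{x, λ^h + p y}`. Replacing the digits of `λ` from position `k` on by
a weight `ν` turns the recursion for `E` into the kernel iteration (`iterKernel`)
`f_{k+1}(ν) = ∑_x A_k(x, ν) f_k(x)`, `f_0 = E⁰`, where
`f_k(ν) = E^k_{∑_{j<k} p^j λ^j + p^k ν}`. Unrolled, `f_k(ν)` is a sum over paths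
`μ_0, …, μ_{k-1}, μ_k = ν` of `∏_h A_h(μ_h, μ_{h+1}) E⁰_{μ_0}`, and all sums are finite because
`p_{x,y} ≠ 0` forces `N x ≤ N y`. Once `p^k > λ` we have `E^k_λ = f_k(0)`; beyond `k` the digits
of `λ` vanish and `p_{x,0} ≠ 0` forces `x = 0`, so every sequence contributing to the infinite sum
vanishes from `k` on, and the two sums agree term by term.
-/

open Function Finset

section PathSum

variable {α S M : Type*} [CommSemiring S] [AddCommMonoid M] [Module S M]

noncomputable def iterKernel (A : ℕ → α → α → S) (g : α → M) : ℕ → α → M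
  | 0 => g
  | k + 1 => fun y => ∑ᶠ x, A k x y • iterKernel A g k x

def extendSeq {k : ℕ} (t : Fin k → α) (y : α) : ℕ → α :=
  fun h => if hh : h < k then t ⟨h, hh⟩ else y

def pathWeight (A : ℕ → α → α → S) (k : ℕ) (μ : ℕ → α) : S :=
  ∏ h ∈ range k, A h (μ h) (μ (h + 1))

lemma extendSeq_of_le {k h : ℕ} (t : Fin k → α) (y : α) (hkh : k ≤ h) :
    extendSeq t y h = y :=
  dif_neg (by omega)

lemma extendSeq_snoc {k h : ℕ} (t : Fin k → α) (x y : α) (hhk : h ≤ k) :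
    extendSeq (Fin.snoc t x : Fin (k + 1) → α) y h = extendSeq t x h := by
  rcases hhk.lt_or_eq with hlt | rfl
  · simp [extendSeq, hlt, Nat.lt_succ_of_lt hlt, Fin.snoc, Fin.castLT]
  · simp only [extendSeq, lt_add_one, dite_true, lt_irrefl, dite_false]
    exact Fin.snoc_last (α := fun _ => α) x t

lemma extendSeq_injective (k : ℕ) (y : α) : Injective fun t : Fin k → α => extendSeq t y :=
  fun t t' h => funext fun i => by simpa [extendSeq] using congrFun h i

lemma pathWeight_extendSeq_snoc (A : ℕ → α → α → S) {k : ℕ} (t : Fin k → α) (x y : α) :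
    pathWeight A (k + 1) (extendSeq (Fin.snoc t x : Fin (k + 1) → α) y) =
      pathWeight A k (extendSeq t x) * A k x y := by
  rw [pathWeight, prod_range_succ, extendSeq_snoc t x y le_rfl, extendSeq_of_le _ _ le_rfl,
    extendSeq_of_le _ _ le_rfl]
  congr 1
  refine prod_congr rfl fun h hh => ?_
  rw [mem_range] at hh
  rw [extendSeq_snoc _ _ _ hh.le, extendSeq_snoc _ _ _ hh]

variable {A : ℕ → α → α → S}

lemma hasFiniteSupport_pathWeight_mul (hA : ∀ h y, HasFiniteSupport (A h · y)) {k : ℕ}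
    (hk : ∀ x, HasFiniteSupport fun t : Fin k → α => pathWeight A k (extendSeq t x)) (y : α) :
    HasFiniteSupport fun q : α × (Fin k → α) =>
      pathWeight A k (extendSeq q.2 q.1) * A k q.1 y := by
  refine ((hA k y).biUnion fun x _ => (Set.finite_singleton x).prod (hk x)).subset ?_
  rintro ⟨x, t⟩ hq
  exact Set.mem_biUnion (right_ne_zero_of_mul hq) ⟨rfl, left_ne_zero_of_mul hq⟩

lemma hasFiniteSupport_pathWeight (hA : ∀ h y, HasFiniteSupport (A h · y)) (k : ℕ) (y : α) :
    HasFiniteSupport fun t : Fin k → α => pathWeight A k (extendSeq t y) := by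
  induction k generalizing y with
  | zero => exact Set.toFinite _
  | succ k ih =>
    refine ((hasFiniteSupport_pathWeight_mul hA ih y).image
      (Fin.snocEquiv fun _ => α)).subset fun t ht => ?_
    refine ⟨(Fin.snocEquiv fun _ => α).symm t, ?_, Equiv.apply_symm_apply _ _⟩
    rw [mem_support, ← Fin.snoc_init_self t, pathWeight_extendSeq_snoc] at ht
    simpa using ht

theorem iterKernel_eq_finsum (hA : ∀ h y, HasFiniteSupport (A h · y)) (g : α → M) (k : ℕ)
    (y : α) :
    iterKernel A g k y =
      ∑ᶠ t : Fin k → α, pathWeight A k (extendSeq t y) • g (extendSeq t y 0) := by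
  induction k generalizing y with
  | zero => simp [iterKernel, pathWeight, extendSeq, finsum_unique]
  | succ k ih =>
    have hpairs : HasFiniteSupport fun q : α × (Fin k → α) =>
        (pathWeight A k (extendSeq q.2 q.1) * A k q.1 y) • g (extendSeq q.2 q.1 0) :=
      (hasFiniteSupport_pathWeight_mul hA (hasFiniteSupport_pathWeight hA k) y).subset
        fun q hq => left_ne_zero_of_smul hq
    calc iterKernel A g (k + 1) y
        = ∑ᶠ x, ∑ᶠ t : Fin k → α,
            (pathWeight A k (extendSeq t x) * A k x y) • g (extendSeq t x 0) := by
          refine finsum_congr fun x => ?_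
          rw [ih, smul_finsum']
          · simp only [mul_comm, smul_smul]
          · exact (hasFiniteSupport_pathWeight hA k x).subset fun t ht =>
              left_ne_zero_of_smul ht
      _ = ∑ᶠ q : α × (Fin k → α),
            (pathWeight A k (extendSeq q.2 q.1) * A k q.1 y) • g (extendSeq q.2 q.1 0) :=
          (finsum_curry _ hpairs).symm
      _ = _ := by
          refine Eq.trans (finsum_congr fun q => ?_) (finsum_comp_equiv (Fin.snocEquiv fun _ => α))
          rw [show (Fin.snocEquiv fun _ => α) q = Fin.snoc q.2 q.1 from rfl,
            pathWeight_extendSeq_snoc, extendSeq_snoc _ _ _ k.zero_le]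

end PathSum

lemma finsum_eq_finsum_comp_of_support_subset_range {β γ M : Type*} [AddCommMonoid M]
    {F : β → M} {e : γ → β} (he : Injective e) (hF : support F ⊆ Set.range e) :
    ∑ᶠ b, F b = ∑ᶠ c, F (e c) := by
  rw [← finsum_mem_range he, ← finsum_mem_univ]
  exact finsum_mem_inter_support_eq' F _ _ fun b hb => by simp [hF hb]

section EventuallyZero

variable {α S M : Type*} [Zero α] [CommSemiring S] [AddCommMonoid M] [Module S M]
  {A : ℕ → α → α → S} {K : ℕ} {μ : ℕ → α}

lemma eventually_kernel_eq_one (hone : ∀ h, K ≤ h → A h 0 0 = 1)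
    (hμ : ∃ n, ∀ h, n ≤ h → μ h = 0) : ∃ n, ∀ h, n ≤ h → A h (μ h) (μ (h + 1)) = 1 := by
  obtain ⟨n, hn⟩ := hμ
  refine ⟨max n K, fun h hh => ?_⟩
  rw [hn h (le_of_max_le_left hh), hn (h + 1) (by omega), hone h (le_of_max_le_right hh)]

lemma hasFiniteMulSupport_kernel (hone : ∀ h, K ≤ h → A h 0 0 = 1)
    (hμ : ∃ n, ∀ h, n ≤ h → μ h = 0) : HasFiniteMulSupport fun h => A h (μ h) (μ (h + 1)) := by
  obtain ⟨n, hn⟩ := eventually_kernel_eq_one hone hμ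
  exact (Set.finite_Iio n).subset fun h hh => not_le.1 fun hnh => hh (hn h hnh)

lemma eq_zero_of_kernel_ne_zero (hzero : ∀ h, K ≤ h → ∀ x, A h x 0 ≠ 0 → x = 0)
    (hμ : ∃ n, ∀ h, n ≤ h → μ h = 0) (hne : ∀ h, A h (μ h) (μ (h + 1)) ≠ 0) {h : ℕ}
    (hKh : K ≤ h) : μ h = 0 := by
  obtain ⟨n, hn⟩ := hμ
  suffices ∀ j h, K ≤ h → n ≤ h + j → μ h = 0 from this n h hKh (by omega)
  intro j
  induction j with
  | zero => exact fun h _ hnh => hn h hnh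
  | succ j ih =>
    intro h hKh hnh
    have hA := hne h
    rw [ih (h + 1) (by omega) (by omega)] at hA
    exact hzero h hKh _ hA

lemma finprod_eq_pathWeight {m : ℕ} (hone : ∀ h, m ≤ h → A h 0 0 = 1)
    (hμ : ∀ h, m ≤ h → μ h = 0) : ∏ᶠ h, A h (μ h) (μ (h + 1)) = pathWeight A m μ := by
  refine finprod_eq_prod_of_mulSupport_subset _ fun h hh => ?_
  by_contra hhm
  rw [coe_range, Set.mem_Iio, not_lt] at hhm
  apply hh
  change A h (μ h) (μ (h + 1)) = 1
  rw [hμ h hhm, hμ (h + 1) (by omega), hone h hhm]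

theorem iterKernel_zero_eq_finsum_seq (hA : ∀ h y, HasFiniteSupport (A h · y))
    (hone : ∀ h, K ≤ h → A h 0 0 = 1) (hzero : ∀ h, K ≤ h → ∀ x, A h x 0 ≠ 0 → x = 0)
    (g : α → M) {m : ℕ} (hm : K ≤ m) :
    (support fun μ : {f : ℕ → α // ∃ n, ∀ h, n ≤ h → f h = 0} =>
      (∏ᶠ h, A h (μ.1 h) (μ.1 (h + 1))) • g (μ.1 0)).Finite ∧
    iterKernel A g m 0 = ∑ᶠ μ : {f : ℕ → α // ∃ n, ∀ h, n ≤ h → f h = 0},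
      (∏ᶠ h, A h (μ.1 h) (μ.1 (h + 1))) • g (μ.1 0) := by
  set F := fun μ : {f : ℕ → α // ∃ n, ∀ h, n ≤ h → f h = 0} =>
    (∏ᶠ h, A h (μ.1 h) (μ.1 (h + 1))) • g (μ.1 0)
  let e : (Fin m → α) → {f : ℕ → α // ∃ n, ∀ h, n ≤ h → f h = 0} :=
    fun t => ⟨extendSeq t 0, m, fun _ => extendSeq_of_le t 0⟩
  have he : Injective e := fun t t' htt' => extendSeq_injective m 0 (congrArg Subtype.val htt')
  have hFe (t : Fin m → α) : F (e t) = pathWeight A m (extendSeq t 0) • g (extendSeq t 0 0) := by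
    rw [← finprod_eq_pathWeight (fun h hh => hone h (hm.trans hh)) fun _ => extendSeq_of_le t 0]
  have hsupp : support F ⊆ Set.range e := by
    intro μ hμ
    have hne (h : ℕ) : A h (μ.1 h) (μ.1 (h + 1)) ≠ 0 := fun h0 =>
      left_ne_zero_of_smul hμ (finprod_eq_zero _ h h0 (hasFiniteMulSupport_kernel hone μ.2))
    refine ⟨fun i => μ.1 i, Subtype.ext (funext fun h => ?_)⟩
    by_cases hh : h < m
    · simp [e, extendSeq, hh]
    · simp [e, extendSeq, hh, eq_zero_of_kernel_ne_zero hzero μ.2 hne (hm.trans (not_lt.1 hh))]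
  have hfin : (support (F ∘ e)).Finite := (hasFiniteSupport_pathWeight hA m 0).subset
    fun t ht => by
      rw [mem_support, comp_apply, hFe] at ht
      exact left_ne_zero_of_smul ht
  refine ⟨(hfin.image e).subset fun μ hμ => ?_, ?_⟩
  · obtain ⟨t, rfl⟩ := hsupp hμ
    exact ⟨t, hμ, rfl⟩
  · rw [iterKernel_eq_finsum hA, finsum_eq_finsum_comp_of_support_subset_range he hsupp]
    exact finsum_congr fun t => (hFe t).symm

end EventuallyZero

section Digits

variable {ι : Type*} {p : ℕ}

lemma trunc_apply (p k : ℕ) (lam : ι → ℕ) (i : ι) : trunc p k lam i = lam i % p ^ k := by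
  induction k with
  | zero => simp [trunc, Nat.mod_one]
  | succ k ih =>
    simp only [trunc, sum_range_succ, Finset.sum_apply] at ih ⊢
    rw [ih, Nat.mod_pow_succ]
    rfl

lemma trunc_eq_self {k : ℕ} {lam : ι → ℕ} (h : ∀ i, lam i < p ^ k) : trunc p k lam = lam :=
  funext fun i => by rw [trunc_apply, Nat.mod_eq_of_lt (h i)]

lemma trunc_trunc_add_pow_smul (k : ℕ) (lam ν : ι → ℕ) :
    trunc p k (trunc p (k + 1) lam + p ^ (k + 1) • ν) = trunc p k lam :=
  funext fun i => by
    simp only [trunc_apply, Pi.add_apply, Pi.smul_apply, smul_eq_mul]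
    rw [pow_succ, mul_assoc, Nat.add_mul_mod_self_left, Nat.mod_mod_of_dvd _ (dvd_mul_right _ _)]

lemma digit_eq_zero_of_lt {k : ℕ} {lam : ι → ℕ} (h : ∀ i, lam i < p ^ k) : digit p lam k = 0 :=
  funext fun i => by simp [digit, Nat.div_eq_of_lt (h i)]

lemma digit_add (k j : ℕ) (lam : ι → ℕ) :
    digit p lam (k + j) = digit p (fun i => lam i / p ^ k) j :=
  funext fun i => by simp only [digit, pow_add, Nat.div_div_eq_div_mul]

variable [Fintype ι]

lemma exists_forall_lt_pow (hp : 1 < p) (lam : ι → ℕ) : ∃ K, ∀ h, K ≤ h → ∀ i, lam i < p ^ h :=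
  ⟨∑ i, lam i, fun _ hh i => (single_le_sum (fun j _ => Nat.zero_le (lam j)) (mem_univ i)).trans_lt
    ((Nat.lt_pow_self hp).trans_le (Nat.pow_le_pow_right (by omega) hh))⟩

lemma shift_eq_div (hp : 1 < p) (k : ℕ) (lam : ι → ℕ) :
    shift p k lam = fun i => lam i / p ^ k := by
  set μ := fun i => lam i / p ^ k
  obtain ⟨L, hL⟩ := exists_forall_lt_pow hp μ
  have hsupp : (support fun j => p ^ j • digit p μ j) ⊆ range L := fun j hj => by
    by_contra hjL
    rw [coe_range, Set.mem_Iio, not_lt] at hjL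
    refine hj ?_
    change p ^ j • digit p μ j = 0
    rw [digit_eq_zero_of_lt (hL j hjL), smul_zero]
  simp only [shift, digit_add k]
  rw [finsum_eq_sum_of_support_subset _ hsupp]
  exact trunc_eq_self (hL L le_rfl)

lemma shift_trunc_add_pow_smul (hp : 1 < p) (k : ℕ) (lam ν : ι → ℕ) :
    shift p k (trunc p (k + 1) lam + p ^ (k + 1) • ν) = digit p lam k + p • ν := by
  rw [shift_eq_div hp]
  funext i
  simp only [Pi.add_apply, Pi.smul_apply, smul_eq_mul, trunc_apply, digit]
  rw [pow_succ, mul_assoc, Nat.add_mul_div_left _ _ (Nat.pow_pos (by omega)),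
    Nat.mod_mul_right_div_self]

end Digits

lemma monotone_addMonoidHom {M₁ M₂ : Type*} [AddCommMonoid M₁] [Preorder M₁] [ExistsAddOfLE M₁]
    [AddCommMonoid M₂] [PartialOrder M₂] [CanonicallyOrderedAdd M₂] (f : M₁ →+ M₂) :
    Monotone f := fun a b hab => by
  obtain ⟨c, rfl⟩ := exists_add_of_le hab
  simp

section Norm

variable {ι : Type*} {N : (ι → ℕ) →+ ℕ}

lemma apply_le_map (hN : ∀ a, N a = 0 → a = 0) (a : ι → ℕ) (i : ι) : a i ≤ N a := by
  classical
  calc a i ≤ a i * N (Pi.single i 1) :=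
        Nat.le_mul_of_pos_right _ (Nat.pos_of_ne_zero fun h => by simpa using congrFun (hN _ h) i)
    _ = N (a i • Pi.single i 1) := by rw [map_nsmul, smul_eq_mul]
    _ ≤ N a := monotone_addMonoidHom N fun j => by
      rcases eq_or_ne j i with rfl | hji <;> simp [*]

lemma finite_setOf_map_le [Finite ι] (hN : ∀ a, N a = 0 → a = 0) (C : ℕ) :
    {a : ι → ℕ | N a ≤ C}.Finite :=
  (Set.Finite.pi fun _ => Set.finite_Iic C).subset fun a ha i _ => (apply_le_map hN a i).trans ha

end Norm

lemma E_trunc_add_pow_smul_eq_iterKernel {ι : Type*} [Fintype ι] {p : ℕ} (hp : 1 < p)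
    (P : (ι → ℕ) → (ι → ℕ) → ℤ) (E0 : (ι → ℕ) → R) (lam : ι → ℕ) (k : ℕ) (ν : ι → ℕ) :
    E p P E0 k (trunc p k lam + p ^ k • ν) =
      iterKernel (fun h x y => P x (digit p lam h + p • y)) E0 k ν := by
  induction k generalizing ν with
  | zero => simp [E, iterKernel, trunc]
  | succ k ih =>
    simp only [E, iterKernel, shift_trunc_add_pow_smul hp, trunc_trunc_add_pow_smul, ih]

theorem Einf_eq_sum_infinite_prod_general {I : Type*} [Fintype I] {R : Type*} [CommRing R]
    (p : ℕ) (hp : 2 ≤ p)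
    (le : (I → ℕ) → (I → ℕ) → Prop)
    (N : (I → ℕ) →+ ℕ)
    (hN_zero : ∀ a, N a = 0 → a = 0)
    (hN_mono : ∀ a b, le a b → N a ≤ N b)
    (P : (I → ℕ) → (I → ℕ) → ℤ)
    (hP_le : ∀ mu lam, P mu lam ≠ 0 → le mu lam)
    (hP_diag : ∀ lam, P lam lam = 1)
    (E0 : (I → ℕ) → R)
    (Einf : (I → ℕ) → R)
    (hEinf : ∀ lam, ∃ n : ℕ, ∀ k, n ≤ k → E p P E0 k lam = Einf lam)
    (lam : I → ℕ) :
    (∀ mu : {f : ℕ → I → ℕ // ∃ n : ℕ, ∀ h, n ≤ h → f h = 0},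
      ∃ n : ℕ, ∀ h, n ≤ h → P (mu.1 h) (digit p lam h + p • mu.1 (h + 1)) = 1) ∧
    (Function.support fun mu : {f : ℕ → I → ℕ // ∃ n : ℕ, ∀ h, n ≤ h → f h = 0} =>
      (∏ᶠ h : ℕ, P (mu.1 h) (digit p lam h + p • mu.1 (h + 1))) • E0 (mu.1 0)).Finite ∧
    Einf lam =
      ∑ᶠ mu : {f : ℕ → I → ℕ // ∃ n : ℕ, ∀ h, n ≤ h → f h = 0},
        (∏ᶠ h : ℕ, P (mu.1 h) (digit p lam h + p • mu.1 (h + 1))) • E0 (mu.1 0) := by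
  obtain ⟨K, hK⟩ := exists_forall_lt_pow hp lam
  obtain ⟨n, hn⟩ := hEinf lam
  set A : ℕ → (I → ℕ) → (I → ℕ) → ℤ := fun h x y => P x (digit p lam h + p • y)
  have hdigit (h : ℕ) (hh : K ≤ h) : digit p lam h = 0 := digit_eq_zero_of_lt (hK h hh)
  have hone (h : ℕ) (hh : K ≤ h) : A h 0 0 = 1 := by
    simp only [A, hdigit h hh, smul_zero, add_zero, hP_diag]
  have hzero (h : ℕ) (hh : K ≤ h) (x : I → ℕ) (hx : A h x 0 ≠ 0) : x = 0 := by
    simp only [A, hdigit h hh, smul_zero, add_zero] at hx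
    exact hN_zero x (Nat.le_zero.1 ((hN_mono _ _ (hP_le _ _ hx)).trans_eq (map_zero N)))
  have hfin (h : ℕ) (y : I → ℕ) : HasFiniteSupport (A h · y) :=
    (finite_setOf_map_le hN_zero _).subset fun x hx => hN_mono _ _ (hP_le _ _ hx)
  have hE : Einf lam = iterKernel A E0 (max n K) 0 :=
    calc Einf lam = E p P E0 (max n K) lam := (hn _ (le_max_left n K)).symm
      _ = E p P E0 (max n K) (trunc p (max n K) lam + p ^ max n K • 0) := by
        rw [smul_zero, add_zero, trunc_eq_self (hK _ (le_max_right n K))]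
      _ = iterKernel A E0 (max n K) 0 := E_trunc_add_pow_smul_eq_iterKernel hp P E0 lam _ 0
  refine ⟨fun μ => eventually_kernel_eq_one hone μ.2, ?_⟩
  rw [hE]
  exact iterKernel_zero_eq_finsum_seq hfin hone hzero E0 (le_max_right n K)

/-- `E^∞_λ` equals the sum, over all finitely supported sequences
`(μ₀, μ₁, …)` in `X⁺`, of `(∏_{h≥0} p_{μ_h, λ^h + p·μ_{h+1}}) · E⁰_{μ₀}`; in each term all
but finitely many factors equal `1`, and only finitely many sequences contribute. -/
theorem Einf_eq_sum_infinite_prod {I : Type*} [Fintype I] {R : Type*} [CommRing R]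
    (p : ℕ) (hp : 2 ≤ p)
    (le : (I → ℕ) → (I → ℕ) → Prop)
    (hle_refl : ∀ a, le a a)
    (hle_antisymm : ∀ a b, le a b → le b a → a = b)
    (hle_trans : ∀ a b c, le a b → le b c → le a c)
    (N : (I → ℕ) →+ ℕ)
    (hN_zero : ∀ a, N a = 0 → a = 0)
    (hN_mono : ∀ a b, le a b → N a ≤ N b)
    (P : (I → ℕ) → (I → ℕ) → ℤ)
    (hP_le : ∀ mu lam, P mu lam ≠ 0 → le mu lam)
    (hP_diag : ∀ lam, P lam lam = 1)
    (E0 : (I → ℕ) → R)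
    (Einf : (I → ℕ) → R)
    (hEinf : ∀ lam, ∃ n : ℕ, ∀ k, n ≤ k → E p P E0 k lam = Einf lam)
    (lam : I → ℕ) :
    (∀ mu : {f : ℕ → I → ℕ // ∃ n : ℕ, ∀ h, n ≤ h → f h = 0},
      ∃ n : ℕ, ∀ h, n ≤ h → P (mu.1 h) (digit p lam h + p • mu.1 (h + 1)) = 1) ∧
    (Function.support fun mu : {f : ℕ → I → ℕ // ∃ n : ℕ, ∀ h, n ≤ h → f h = 0} =>
      (∏ᶠ h : ℕ, P (mu.1 h) (digit p lam h + p • mu.1 (h + 1))) • E0 (mu.1 0)).Finite ∧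
    Einf lam =
      ∑ᶠ mu : {f : ℕ → I → ℕ // ∃ n : ℕ, ∀ h, n ≤ h → f h = 0},
        (∏ᶠ h : ℕ, P (mu.1 h) (digit p lam h + p • mu.1 (h + 1))) • E0 (mu.1 0) :=
  Einf_eq_sum_infinite_prod_general p hp le N hN_zero hN_mono P hP_le hP_diag E0 Einf hEinf lam

end LusztigChar
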